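/- arXiv:1802.03323 — 2 statements merged into one kernel-verified Lean document; each statement's English description precedes it below -/
import Mathlib

section
/- Let a, b, c ∈ K^× be elements whose images rv(a), rv(b), rv(c) in RV^* are pairwise distinct, and let a', b', c' ∈ K^× satisfy rv(a') = rv(a), rv(b') = rv(b) and rv(c') = rv(c). Then C(a,b,c) holds if and only if C(a',b',c') holds. -/
open FirstOrder Language Set

universe u v

/-- Data of a nontrivial valuation on `K` with value group `Γ` (written additively,
with `⊤` playing the role of `∞`), surjective onto `Γ` on `K^×`. -/
structure ValData (K : Type u) (Γ : Type v) [Field K] [AddCommGroup Γ] [LinearOrder Γ] [IsOrderedAddMonoid Γ] where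
  v : K → WithTop Γ
  v_top : ∀ x : K, v x = ⊤ ↔ x = 0
  v_mul : ∀ x y : K, v (x * y) = v x + v y
  v_add : ∀ x y : K, min (v x) (v y) ≤ v (x + y)
  v_surj : ∀ γ : Γ, ∃ x : K, v x = (γ : WithTop Γ)

namespace ValData

variable {K : Type u} {Γ : Type v} [Field K] [AddCommGroup Γ] [LinearOrder Γ] [IsOrderedAddMonoid Γ]

/-- `B` is an open ball (the whole field counts as an open ball). -/
def OBall (V : ValData K Γ) (B : Set K) : Prop :=
  B = univ ∨ ∃ (a : K) (γ : Γ), B = {x : K | (γ : WithTop Γ) < V.v (x - a)}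

/-- `B` is a closed ball. -/
def CBall (V : ValData K Γ) (B : Set K) : Prop :=
  ∃ (a : K) (γ : Γ), B = {x : K | (γ : WithTop Γ) ≤ V.v (x - a)}

/-- `B` is a ball. -/
def IsBall (V : ValData K Γ) (B : Set K) : Prop := V.OBall B ∨ V.CBall B

/-- The `C`-relation: `C(x,y,z)` iff `v(x−y) = v(x−z) < v(y−z)`. -/
def Crel (V : ValData K Γ) (x y z : K) : Prop :=
  V.v (x - y) = V.v (x - z) ∧ V.v (x - y) < V.v (y - z)

/-- `rv x = rv y`, i.e. `v x = v y < v (x - y)`. -/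
def rvEq (V : ValData K Γ) (x y : K) : Prop :=
  V.v x = V.v y ∧ V.v x < V.v (x - y)

/-- `f` restricted to the open ball `B` is a `C`-isomorphism. -/
def CIso (V : ValData K Γ) (B : Set K) (f : K → K) : Prop :=
  V.OBall (f '' B) ∧ ∀ x ∈ B, ∀ y ∈ B, ∀ z ∈ B, (V.Crel x y z ↔ V.Crel (f x) (f y) (f z))

/-- `f : X → K` is a local `C`-isomorphism. -/
def LocalCIso (V : ValData K Γ) (X : Set K) (f : K → K) : Prop :=
  ∀ x ∈ X, ∃ B : Set K, V.OBall B ∧ x ∈ B ∧ B ⊆ X ∧ V.CIso B f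

end ValData

/-- Finite boolean combinations of members of a family `B` of sets. -/
inductive BoolComb {α : Type*} (B : Set (Set α)) : Set α → Prop
  | base {s : Set α} : s ∈ B → BoolComb B s
  | compl {s : Set α} : BoolComb B s → BoolComb B sᶜ
  | inter {s t : Set α} : BoolComb B s → BoolComb B t → BoolComb B (s ∩ t)

/-- The balls of an `L`-structure `K'`, computed via a formula `φsub` (defining the graph of
subtraction) and a formula `φdiv` (defining the divisibility relation `v x ≤ v y`):
`K'` itself, the sets `{x : div (b, x − a)}` and the sets `{x : ¬ div (x − a, b)}`. -/
def ballsVia (L : Language) (K' : Type u) [L.Structure K']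
    (φsub : L.Formula (Fin 3)) (φdiv : L.Formula (Fin 2)) : Set (Set K') :=
  {univ} ∪
    {S | ∃ a b : K', S = {x : K' | ∃ z : K', φsub.Realize ![x, a, z] ∧ φdiv.Realize ![b, z]}} ∪
    {S | ∃ a b : K', S = {x : K' | ∃ z : K', φsub.Realize ![x, a, z] ∧ ¬ φdiv.Realize ![z, b]}}

/-- `(K, L)` is `C`-minimal: in every `L`-structure elementarily equivalent to `K`, every
definable (with parameters) subset is a finite boolean combination of balls. -/
def CMin (L : Language) (K : Type u) [L.Structure K]
    (φsub : L.Formula (Fin 3)) (φdiv : L.Formula (Fin 2)) : Prop :=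
  ∀ (K' : Type u) [L.Structure K'], (K ≅[L] K') →
    ∀ S : Set K', Set.Definable₁ (univ : Set K') L S →
      BoolComb (ballsVia L K' φsub φdiv) S

section Defs

variable {K : Type u} {Γ : Type v} [Field K] [AddCommGroup Γ] [LinearOrder Γ] [IsOrderedAddMonoid Γ]
variable (V : ValData K Γ) (L : Language) [L.Structure K]

/-- A subset of `K` is definable (with parameters). -/
def Def1 (X : Set K) : Prop := Set.Definable₁ (univ : Set K) L X

/-- A subset of `K^m` is definable (with parameters). -/
def DefSet {m : ℕ} (W : Set (Fin m → K)) : Prop := Set.Definable (univ : Set K) L W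

/-- A function `f` defined on `X ⊆ K` is definable (its graph is definable). -/
def DefFunOn (X : Set K) (f : K → K) : Prop :=
  Set.Definable (univ : Set K) L {p : Fin 2 → K | p 0 ∈ X ∧ p 1 = f (p 0)}

/-- A subset of `K^m × K` (a definable family of subsets of `K`) is definable. -/
def DefFamSet {m : ℕ} (X : Set ((Fin m → K) × K)) : Prop :=
  Set.Definable (univ : Set K) L {p : (Fin m ⊕ Fin 1) → K | (p ∘ Sum.inl, p (Sum.inr 0)) ∈ X}

/-- A family of functions `f_w` defined on `X ⊆ K^m × K` is definable. -/
def DefFamFun {m : ℕ} (X : Set ((Fin m → K) × K)) (f : (Fin m → K) → K → K) : Prop :=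
  Set.Definable (univ : Set K) L {p : (Fin m ⊕ Fin 2) → K |
    (p ∘ Sum.inl, p (Sum.inr 0)) ∈ X ∧ p (Sum.inr 1) = f (p ∘ Sum.inl) (p (Sum.inr 0))}

/-- A function `h : Γ → Γ` is definable iff `{(x,y) ∈ K^× × K^× : v y = h (v x)}` is definable. -/
def DefGFun (h : Γ → Γ) : Prop :=
  Set.Definable (univ : Set K) L {p : Fin 2 → K |
    ∃ γ : Γ, V.v (p 0) = (γ : WithTop Γ) ∧ V.v (p 1) = ((h γ : Γ) : WithTop Γ)}

/-- A function `a : Y → Γ`, `Y ⊆ K`, is definable iff `{(y,s) : y ∈ Y, v s = a y}` is definable. -/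
def DefGOn (Y : Set K) (a : K → Γ) : Prop :=
  Set.Definable (univ : Set K) L {p : Fin 2 → K |
    p 0 ∈ Y ∧ V.v (p 1) = ((a (p 0) : Γ) : WithTop Γ)}

/-- A function `a : W → Γ`, `W ⊆ K^m`, is definable. -/
def DefGOnW {m : ℕ} (W : Set (Fin m → K)) (a : (Fin m → K) → Γ) : Prop :=
  Set.Definable (univ : Set K) L {p : (Fin m ⊕ Fin 1) → K |
    (p ∘ Sum.inl) ∈ W ∧ V.v (p (Sum.inr 0)) = ((a (p ∘ Sum.inl) : Γ) : WithTop Γ)}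

/-- A function `a : Y → Γ`, `Y ⊆ K^m × K`, is definable. -/
def DefGOnFam {m : ℕ} (Y : Set ((Fin m → K) × K)) (a : (Fin m → K) × K → Γ) : Prop :=
  Set.Definable (univ : Set K) L {p : (Fin m ⊕ Fin 2) → K |
    (p ∘ Sum.inl, p (Sum.inr 0)) ∈ Y ∧
      V.v (p (Sum.inr 1)) = ((a (p ∘ Sum.inl, p (Sum.inr 0)) : Γ) : WithTop Γ)}

/-- A function `c : Y → RV^*`, `Y ⊆ K`, represented by a lift `c : Y → K^×`, is definable iff
`{(y,s) : y ∈ Y, rv s = c y}` is definable. -/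
def DefRVOn (Y : Set K) (c : K → K) : Prop :=
  Set.Definable (univ : Set K) L {p : Fin 2 → K | p 0 ∈ Y ∧ V.rvEq (p 1) (c (p 0))}

/-- `(K,L)` is definably complete: every definable family of nested balls whose set of radii
is unbounded has non-empty intersection. -/
def DefComplete : Prop :=
  ∀ (m : ℕ) (D : Set ((Fin m → K) × K)), DefFamSet L D →
    (∀ t : Fin m → K, ({x : K | (t, x) ∈ D}).Nonempty → V.IsBall {x : K | (t, x) ∈ D}) →
    (∀ t t' : Fin m → K, ({x : K | (t, x) ∈ D}).Nonempty → ({x : K | (t', x) ∈ D}).Nonempty →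
      {x : K | (t, x) ∈ D} ⊆ {x : K | (t', x) ∈ D} ∨
        {x : K | (t', x) ∈ D} ⊆ {x : K | (t, x) ∈ D}) →
    (∀ γ : Γ, ∃ (t : Fin m → K) (a : K), (t, a) ∈ D ∧
      ∀ x : K, (t, x) ∈ D → (γ : WithTop Γ) < V.v (x - a)) →
    ∃ x : K, ∀ t : Fin m → K, ({y : K | (t, y) ∈ D}).Nonempty → (t, x) ∈ D

/-- `h : Γ → Γ` is eventually linear. -/
def EvLinear (h : Γ → Γ) : Prop :=
  ∃ (δ α : Γ) (lam : Γ →+ Γ), ∀ γ : Γ, δ < γ → h γ = lam γ + α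

/-- `h : Γ → Γ` is eventually `ℚ`-linear. -/
def EvQLinear [Module ℚ Γ] (h : Γ → Γ) : Prop :=
  ∃ (δ α : Γ) (r : ℚ), ∀ γ : Γ, δ < γ → h γ = r • γ + α

/-- `(K,L)` is uniformly polynomially bounded. -/
def UnifPolyBdd : Prop :=
  ∀ (m : ℕ) (W : Set (Fin m → K)) (X : Set ((Fin m → K) × K)) (f : (Fin m → K) → K → K),
    DefSet L W → DefFamSet L X → DefFamFun L X f →
    (∀ p ∈ X, p.1 ∈ W) → (∀ w ∈ W, ∃ x : K, (w, x) ∈ X) →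
    ∃ (n : ℤ) (a : (Fin m → K) → Γ), DefGOnW V L W a ∧
      ∀ w ∈ W, ∀ x : K, (w, x) ∈ X → ∀ γ : Γ, V.v x = (γ : WithTop Γ) → γ < a w →
        ((n • γ : Γ) : WithTop Γ) < V.v (f w x)

end Defs

/-- The characteristic exponent of `K`: `1` in characteristic `0`, `char K` otherwise. -/
noncomputable def charExp (K : Type u) [Field K] : ℕ := max (ringChar K) 1

/-!
If `rv a ≠ rv b` then `v (a - b) ≤ min (v a) (v b)`, while replacing `a, b` by `a', b'` in the
same `RV`-classes perturbs `a - b` by `(a' - a) - (b' - b)`, whose valuation exceeds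
`min (v a) (v b)`. Hence `v (a' - b') = v (a - b)`, so the three valuations defining
`C(a, b, c)` are unchanged.
-/

namespace ValData

variable {K : Type u} {Γ : Type v} [Field K] [AddCommGroup Γ] [LinearOrder Γ] [IsOrderedAddMonoid Γ]
variable (V : ValData K Γ)

lemma v_one : V.v 1 = 0 := by
  have hne : V.v 1 ≠ ⊤ := fun h => one_ne_zero ((V.v_top 1).1 h)
  refine WithTop.add_left_cancel hne ?_
  rw [add_zero, ← V.v_mul, one_mul]

def toAddValuation : AddValuation K (WithTop Γ) :=
  AddValuation.of V.v ((V.v_top 0).2 rfl) V.v_one V.v_add V.v_mul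

@[simp]
lemma toAddValuation_apply (x : K) : V.toAddValuation x = V.v x := rfl

variable {V}

lemma v_sub_le_min_of_not_rvEq {a b : K} (h : ¬ V.rvEq a b) :
    V.v (a - b) ≤ min (V.v a) (V.v b) := by
  by_cases hab : V.v a = V.v b
  · rw [← hab, min_self]
    exact not_lt.1 fun hlt => h ⟨hab, hlt⟩
  · have hsub := V.toAddValuation.map_add_of_distinct_val (x := a) (y := -b) (by simpa using hab)
    rw [← sub_eq_add_neg, AddValuation.map_neg] at hsub
    exact hsub.le

lemma rvEq.v_lt_v_sub {a' a : K} (h : V.rvEq a' a) : V.v a < V.v (a' - a) :=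
  h.1 ▸ h.2

lemma v_sub_eq_of_rvEq {a b a' b' : K} (hab : ¬ V.rvEq a b) (ha : V.rvEq a' a)
    (hb : V.rvEq b' b) : V.v (a' - b') = V.v (a - b) := by
  have hmin := v_sub_le_min_of_not_rvEq hab
  have herr : V.v (a - b) < V.v ((a' - a) - (b' - b)) := by
    refine lt_of_lt_of_le ?_ (V.toAddValuation.map_sub _ _)
    simp only [toAddValuation_apply, lt_min_iff]
    exact ⟨(hmin.trans (min_le_left _ _)).trans_lt ha.v_lt_v_sub,
      (hmin.trans (min_le_right _ _)).trans_lt hb.v_lt_v_sub⟩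
  have hsplit : a' - b' = (a - b) + ((a' - a) - (b' - b)) := by ring
  simpa [hsplit] using V.toAddValuation.map_add_eq_of_lt_left (x := a - b) (by simpa using herr)

end ValData

theorem stmt_0_general {K : Type u} {Γ : Type v} [Field K]
    [AddCommGroup Γ] [LinearOrder Γ] [IsOrderedAddMonoid Γ] (V : ValData K Γ)
    (a b c a' b' c' : K)
    (hab : ¬ V.rvEq a b) (hac : ¬ V.rvEq a c) (hbc : ¬ V.rvEq b c)
    (haa : V.rvEq a' a) (hbb : V.rvEq b' b) (hcc : V.rvEq c' c) :
    V.Crel a b c ↔ V.Crel a' b' c' := by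
  unfold ValData.Crel
  rw [ValData.v_sub_eq_of_rvEq hab haa hbb, ValData.v_sub_eq_of_rvEq hac haa hcc,
    ValData.v_sub_eq_of_rvEq hbc hbb hcc]

/-- If `a, b, c ∈ K^×` lie in pairwise distinct `RV`-classes and
`rv a' = rv a`, `rv b' = rv b`, `rv c' = rv c` (with `a', b', c' ∈ K^×`), then
`C(a,b,c) ↔ C(a',b',c')`. -/
theorem stmt_0 {K : Type u} {Γ : Type v} [Field K] [IsAlgClosed K]
    [AddCommGroup Γ] [LinearOrder Γ] [IsOrderedAddMonoid Γ] [Nontrivial Γ] (V : ValData K Γ)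
    (a b c a' b' c' : K)
    (ha : a ≠ 0) (hb : b ≠ 0) (hc : c ≠ 0)
    (ha' : a' ≠ 0) (hb' : b' ≠ 0) (hc' : c' ≠ 0)
    (hab : ¬ V.rvEq a b) (hac : ¬ V.rvEq a c) (hbc : ¬ V.rvEq b c)
    (haa : V.rvEq a' a) (hbb : V.rvEq b' b) (hcc : V.rvEq c' c) :
    V.Crel a b c ↔ V.Crel a' b' c' :=
  stmt_0_general V a b c a' b' c' hab hac hbc haa hbb hcc
end

section
/- Let k be an algebraically closed field, let s and t be coprime positive integers, and let g : k → k be a function such that g(0) = 0, the complement k∖g(k) of the image of g is finite, and (g(u) − g(z))^t = (u − z)^s for all u, z ∈ k. Then either s = t = 1, or k has positive characteristic q and there exists an integer j ≥ 1 such that (s, t) = (q^j, 1) or (s, t) = (1, q^j). -/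
/-!
Put `f u = g (u + 1) - g u`. Every `f u` is a `t`-th root of unity, so some value `ρ ≠ 0` of `f` is
taken on an infinite set `U`. Fix `u₀ ∈ U`. For `u ∈ U`, coprimality of `s` and `t` gives `c` with
`g u - g u₀ = c ^ s` and `u - u₀ = c ^ t`, and the equation at `(u + 1, u₀)` says that `c` is a root of
`(X ^ s + ρ) ^ t - (X ^ t + 1) ^ s`. This polynomial thus has infinitely many roots and vanishes. Since
`s * j ≠ t * i` for `0 < j < t`, comparing coefficients shows that `t.choose j = 0` in `k` for
`0 < j < t`, and likewise for `s`. An integer `n ≥ 2` with this property is a power of the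
characteristic `p`: if `n = p ^ j * m` with `p ∤ m`, Frobenius gives `(X + 1) ^ n = (X ^ p ^ j + 1) ^ m`,
whose coefficient of `X ^ p ^ j` is `m ≠ 0`, so `m = 1`. Finally `s` and `t` cannot both be
nontrivial powers of `p`.
-/

open Polynomial

theorem Set.Finite.exists_infinite_fiber {α β : Type*} [Infinite α] {f : α → β} {s : Set β}
    (hs : s.Finite) (hf : ∀ a, f a ∈ s) : ∃ b ∈ s, (f ⁻¹' {b}).Infinite := by
  by_contra! hfin
  refine Set.infinite_univ (α := α) ((hs.biUnion hfin).subset fun a _ => ?_)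
  exact Set.mem_biUnion (hf a) rfl

theorem exists_expand_eq_expand_of_pow_sub_eq_pow_sub {k : Type*} [Field k] [Infinite k]
    {s t : ℕ} (ht : 0 < t) (hst : s.Coprime t) (g : k → k)
    (heq : ∀ u z : k, (g u - g z) ^ t = (u - z) ^ s) :
    ∃ ρ : k, ρ ≠ 0 ∧ expand k s ((X + C ρ) ^ t) = expand k t ((X + 1) ^ s) := by
  have hroots : {x : k | x ^ t = 1}.Finite :=
    (nthRootsFinset t (1 : k)).finite_toSet.subset fun x hx => (mem_nthRootsFinset ht 1).2 hx
  obtain ⟨ρ, hρ, hfiber⟩ := hroots.exists_infinite_fiber (f := fun u => g (u + 1) - g u)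
    fun u => by simpa using heq (u + 1) u
  have hρ0 : ρ ≠ 0 := by
    rintro rfl
    simp [ht.ne'] at hρ
  obtain ⟨u₀, hu₀⟩ := hfiber.nonempty
  refine ⟨ρ, hρ0, eq_of_infinite_eval_eq _ _ ?_⟩
  refine Set.Infinite.of_image (fun c => c ^ t + u₀) (hfiber.mono fun u hu => ?_)
  obtain ⟨c, hcg, hcu⟩ := (pow_eq_pow_iff_of_coprime hst.symm).1 (heq u u₀)
  refine ⟨c, ?_, by simp [← hcu]⟩
  have hstep : g (u + 1) - g u₀ = c ^ s + ρ := by rw [← hu, ← hcg]; ring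
  have hshift : u + 1 - u₀ = c ^ t + 1 := by rw [← hcu]; ring
  simpa [expand_eval, hstep, hshift] using heq (u + 1) u₀

theorem choose_eq_zero_of_expand_eq {R : Type*} [CommRing R] [NoZeroDivisors R] {s t : ℕ}
    (hs : 0 < s) (ht : 0 < t) (hst : s.Coprime t) {c : R} (hc : c ≠ 0) {f : R[X]}
    (h : expand R s ((X + C c) ^ t) = expand R t f) :
    ∀ j, 0 < j → j < t → (t.choose j : R) = 0 := by
  intro j hj hjt
  have hndvd : ¬ t ∣ s * j := fun hdvd =>
    absurd (Nat.le_of_dvd hj (hst.symm.dvd_of_dvd_mul_left hdvd)) (by omega)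
  have hcoeff := congrArg (coeff · (s * j)) h
  simp only [coeff_expand_mul' hs, coeff_X_add_C_pow, coeff_expand ht, if_neg hndvd] at hcoeff
  exact (mul_eq_zero.1 hcoeff).resolve_left (pow_ne_zero _ hc)

theorem exists_eq_pow_of_choose_eq_zero {R : Type*} [CommRing R] {p : ℕ} [Fact p.Prime]
    [CharP R p] {n : ℕ} (hn : n ≠ 0) (h : ∀ i, 0 < i → i < n → (n.choose i : R) = 0) :
    ∃ j, n = p ^ j := by
  obtain ⟨j, m, hnm, hpm⟩ : ∃ j m, n = p ^ j * m ∧ ¬ p ∣ m :=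
    ⟨_, _, (Nat.ordProj_mul_ordCompl_eq_self n p).symm, Nat.not_dvd_ordCompl Fact.out hn⟩
  refine ⟨j, ?_⟩
  by_contra hne
  have hm : 1 < m := by
    rcases m with _ | _ | m
    · simp at hpm
    · simp_all
    · omega
  have hfrob : (X + 1 : R[X]) ^ n = expand R (p ^ j) ((X + 1) ^ m) := by
    rw [hnm, pow_mul, add_pow_char_pow, one_pow, map_pow, map_add, expand_X, map_one]
  have hq : 0 < p ^ j := pow_pos (Nat.Prime.pos Fact.out) j
  have hcoeff := congrArg (coeff · (1 * p ^ j)) hfrob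
  rw [coeff_expand_mul hq, coeff_X_add_one_pow, coeff_X_add_one_pow, Nat.choose_one_right, one_mul,
    h _ hq (hnm ▸ lt_mul_of_one_lt_right hq hm)] at hcoeff
  exact hpm ((CharP.cast_eq_zero_iff R p m).1 hcoeff.symm)

theorem eq_one_or_eq_ringChar_pow {k : Type*} [Field k] {n : ℕ} (hn : 0 < n)
    (h : ∀ i, 0 < i → i < n → (n.choose i : k) = 0) :
    n = 1 ∨ (ringChar k).Prime ∧ ∃ j, 1 ≤ j ∧ n = ringChar k ^ j := by
  rcases Nat.lt_or_ge n 2 with hn1 | hn2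
  · exact Or.inl (by omega)
  have hchar : ringChar k ∣ n := by
    simpa using (ringChar.spec k n).1 (by simpa using h 1 one_pos hn2)
  have hprime : (ringChar k).Prime :=
    CharP.char_prime_of_ne_zero k fun h0 => by simp [h0] at hchar; omega
  have := Fact.mk hprime
  obtain ⟨j, rfl⟩ := exists_eq_pow_of_choose_eq_zero (R := k) hn.ne' h
  refine Or.inr ⟨hprime, j, Nat.one_le_iff_ne_zero.2 fun hj => ?_, rfl⟩
  simp [hj] at hn2

theorem stmt_15_general {k : Type*} [Field k] [IsAlgClosed k] (s t : ℕ)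
    (hs : 0 < s) (ht : 0 < t) (hst : Nat.Coprime s t)
    (g : k → k)
    (heq : ∀ u z : k, (g u - g z) ^ t = (u - z) ^ s) :
    (s = 1 ∧ t = 1) ∨
      (0 < ringChar k ∧ ∃ j : ℕ, 1 ≤ j ∧
        ((s = ringChar k ^ j ∧ t = 1) ∨ (s = 1 ∧ t = ringChar k ^ j))) := by
  obtain ⟨ρ, hρ, hexpand⟩ := exists_expand_eq_expand_of_pow_sub_eq_pow_sub ht hst g heq
  have hchoose_t := choose_eq_zero_of_expand_eq hs ht hst hρ hexpand
  have hchoose_s := choose_eq_zero_of_expand_eq ht hs hst.symm one_ne_zero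
    (f := (X + C ρ) ^ t) (by rw [C_1, hexpand])
  rcases eq_one_or_eq_ringChar_pow hs hchoose_s with rfl | ⟨hp, i, hi, rfl⟩ <;>
    rcases eq_one_or_eq_ringChar_pow ht hchoose_t with rfl | ⟨hp, j, hj, rfl⟩
  · exact Or.inl ⟨rfl, rfl⟩
  · exact Or.inr ⟨hp.pos, j, hj, Or.inr ⟨rfl, rfl⟩⟩
  · exact Or.inr ⟨hp.pos, i, hi, Or.inl ⟨rfl, rfl⟩⟩
  · exact absurd (Nat.Coprime.eq_one_of_dvd (hst.coprime_dvd_left (dvd_pow_self _ (by omega)))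
      (dvd_pow_self _ (by omega))) hp.one_lt.ne'

/-- Let `k` be an algebraically closed field, `s` and `t` coprime positive
integers, and `g : k → k` a function with `g 0 = 0`, whose image has finite complement, and
such that `(g u − g z) ^ t = (u − z) ^ s` for all `u z : k`. Then either `s = t = 1`, or `k`
has positive characteristic `q` and there is an integer `j ≥ 1` with `(s, t) = (q ^ j, 1)` or
`(s, t) = (1, q ^ j)`. -/
theorem stmt_15 {k : Type*} [Field k] [IsAlgClosed k] (s t : ℕ)
    (hs : 0 < s) (ht : 0 < t) (hst : Nat.Coprime s t)
    (g : k → k) (hg0 : g 0 = 0) (hfin : (Set.range g)ᶜ.Finite)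
    (heq : ∀ u z : k, (g u - g z) ^ t = (u - z) ^ s) :
    (s = 1 ∧ t = 1) ∨
      (0 < ringChar k ∧ ∃ j : ℕ, 1 ≤ j ∧
        ((s = ringChar k ^ j ∧ t = 1) ∨ (s = 1 ∧ t = ringChar k ^ j))) :=
  stmt_15_general s t hs ht hst g heq
end
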